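/- Let η ∈ Ω_{L,N;n1,n2} (so n1 > 0, n2 > 0 and NL − n1 − n2 > 0) and let f be any face. Construct a path of faces f = f_0, f_1, f_2, … by the rule that the edge traversed from f_i to f_{i+1} is not occupied by a dimer of η and has the white vertex on its left. Then this path cannot contain a closed loop; consequently it terminates after a finite number of steps at a face at which all three edges with the white vertex on the left are occupied in η. -/

import Mathlib

/-!
Dimer coverings (perfect matchings) of the hexagonal lattice `Λ_{L,N}` periodized with
period `L` in the `e₁` direction and period `N` in the `e₂` direction
(Corwin–Toninelli, "A (2+1)-dimensional growth process with explicit stationary measures").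

Black vertices, white vertices and hexagonal faces are all indexed by
`(ℤ/Lℤ) × (ℤ/Nℤ)`.  The edge of type `j ∈ {0,1,2}` at the black vertex `b = (s,t)` joins
`b` to the white vertex `whiteEnd b j`; type `0` edges are the vertical ones ("particles"),
type `1` edges are the north-west oriented ones, type `2` edges are the remaining
(horizontal) ones.  A face `g = (s,t)` is bordered by the six edges
`(s,t,0), (s-1,t,0), (s,t,1), (s,t-1,1), (s-1,t,2), (s,t-1,2)`; stepping from a face to an
adjacent face in direction `+e₁` crosses a vertical edge with the white vertex on the
right, stepping in direction `+e₂` crosses a north-west edge with the white vertex on the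
left.
-/

open scoped Classical

noncomputable section

namespace HexDimers

/-- The common index set for black vertices, white vertices and faces of `Λ_{L,N}`. -/
abbrev Idx (L N : ℕ) := ZMod L × ZMod N

variable {L N : ℕ}

/-- The white endpoint of the edge of type `j` at the black vertex `b`:
type `0` is vertical, type `1` is north-west, type `2` is horizontal. -/
def whiteEnd (b : Idx L N) : Fin 3 → Idx L N :=
  ![b, (b.1 - 1, b.2 + 1), (b.1, b.2 + 1)]

/-- A candidate dimer covering: for every black vertex, the type of the dimer covering it. -/
abbrev Covering (L N : ℕ) := Idx L N → Fin 3

/-- Perfect matchings (dimer coverings): distinct black vertices are matched to distinct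
white vertices (hence, by counting, every white vertex is covered exactly once). -/
def IsCovering (M : Covering L N) : Prop :=
  Function.Injective fun b => whiteEnd b (M b)

/-- The number `n₁` of vertical dimers of a covering. -/
def nVert [NeZero L] [NeZero N] (M : Covering L N) : ℕ :=
  (Finset.univ.filter fun b : Idx L N => M b = 0).card

/-- The number `n₂` of north-west oriented dimers of a covering. -/
def nNW [NeZero L] [NeZero N] (M : Covering L N) : ℕ :=
  (Finset.univ.filter fun b : Idx L N => M b = 1).card

/-- `Ω_{L,N;n₁,n₂}`: the dimer coverings of `Λ_{L,N}` with `n₁` vertical dimers and `n₂`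
north-west oriented dimers. -/
def Omega (L N : ℕ) [NeZero L] [NeZero N] (n1 n2 : ℕ) : Set (Covering L N) :=
  {M | IsCovering M ∧ nVert M = n1 ∧ nNW M = n2}

/-- The six directions in which a face of `Λ_{L,N}` can be left towards an adjacent face:
`R/Lft` are `±e₁`, `U/D` are `±e₂`, and `UL/DR` are `∓(e₁ - e₂)`. -/
inductive Dir | R | Lft | U | D | UL | DR
  deriving DecidableEq

/-- The face reached from the face `g` by one step in direction `d`. -/
def nextFace (g : Idx L N) : Dir → Idx L N
  | .R => (g.1 + 1, g.2)
  | .Lft => (g.1 - 1, g.2)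
  | .U => (g.1, g.2 + 1)
  | .D => (g.1, g.2 - 1)
  | .UL => (g.1 - 1, g.2 + 1)
  | .DR => (g.1 + 1, g.2 - 1)

/-- The edge (given by its black vertex together with its type) crossed when stepping from
the face `g` in direction `d`. -/
def crossEdge (g : Idx L N) : Dir → Idx L N × Fin 3
  | .R => ((g.1, g.2), 0)
  | .Lft => ((g.1 - 1, g.2), 0)
  | .U => ((g.1, g.2), 1)
  | .D => ((g.1, g.2 - 1), 1)
  | .UL => ((g.1 - 1, g.2), 2)
  | .DR => ((g.1, g.2 - 1), 2)

/-- The sign `ε_e` of a crossing: `+1` if the edge is crossed with the white vertex on the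
right, `-1` if it is crossed with the white vertex on the left. -/
def crossSign : Dir → ℤ
  | .R => 1
  | .Lft => -1
  | .U => -1
  | .D => 1
  | .UL => 1
  | .DR => -1

/-- Whether the edge `e` (black vertex and type) is occupied by a dimer of `M`. -/
def occupiedEdge (M : Covering L N) (e : Idx L N × Fin 3) : Prop := M e.1 = e.2

/-- One step of the path construction of Lemma 2 (`lemma:loop`): from the face `g` one
moves to an adjacent face `g'` across an edge that is *not* occupied in `M` and has the
white vertex on the left. -/
def WhiteLeftStep (M : Covering L N) (g g' : Idx L N) : Prop :=
  ∃ d : Dir, crossSign d = -1 ∧ g' = nextFace g d ∧ ¬ occupiedEdge M (crossEdge g d)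


/-! Every vertex carries exactly one dimer, so the increments `3·1_{e∈η} − 1` across
vertical edges and `1 − 3·1_{e∈η}` across north-west edges form a closed 1-form on `ℤ²`; its
integral is a height function which rises by exactly `1` across every unoccupied edge with
the white vertex on the left. Along one period in `e₁` (resp. `e₂`) the height grows by
`(3n₁ − NL)/N` (resp. `(NL − 3n₂)/L`). Scaling by `NL` and subtracting this average slope
leaves a function on the torus which increases by `3n₁`, `3n₂` and `3(NL − n₁ − n₂)` along the
three white-left directions. It strictly increases along the path, so the path has no loop,
and on the finite torus the greedy path gets stuck. -/

section Paths

variable {α β : Type*} [Preorder β] {r : α → α → Prop}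

lemma path_injective_of_lt (φ : α → β) (hφ : ∀ a b, r a b → φ a < φ b) {n : ℕ}
    {fs : Fin (n + 1) → α} (hfs : ∀ i : Fin n, r (fs i.castSucc) (fs i.succ)) :
    Function.Injective fs :=
  (Fin.strictMono_iff_lt_succ.2 fun i => hφ _ _ (hfs i)).injective.of_comp

/-- Follow `r` greedily from `a`: the path cannot revisit a point, so it gets stuck within
`Nat.card α` steps. -/
lemma exists_path_to_terminal [Finite α] (φ : α → β) (hφ : ∀ a b, r a b → φ a < φ b)
    (a : α) :
    ∃ (n : ℕ) (fs : Fin (n + 1) → α), fs 0 = a ∧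
      (∀ i : Fin n, r (fs i.castSucc) (fs i.succ)) ∧ ∀ b, ¬ r (fs (Fin.last n)) b := by
  by_contra! hstuck
  let next (x : α) : α := if h : ∃ b, r x b then h.choose else x
  have hnext (x : α) (h : ∃ b, r x b) : r x (next x) := by
    simpa only [next, dif_pos h] using h.choose_spec
  have hchain : ∀ n, ∀ i < n, r (next^[i] a) (next^[i + 1] a) := by
    intro n
    induction n with
    | zero => intro i hi; omega
    | succ n ih =>
      intro i hi
      rcases Nat.lt_succ_iff_lt_or_eq.1 hi with hi | rfl
      · exact ih i hi
      · rw [Function.iterate_succ_apply']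
        exact hnext _ (hstuck i (fun j => next^[j] a) rfl fun j => by simpa using ih j j.2)
  have hinj := path_injective_of_lt φ hφ
    (fs := fun i : Fin (Nat.card α + 1) => next^[i] a) fun i => by simpa using hchain _ i i.2
  have := Nat.card_le_card_of_injective _ hinj
  simp at this

end Paths

section Potential

variable {G : Type*} [AddCommGroup G]

def signedSum (f : ℤ → G) (x : ℤ) : G :=
  ∑ i ∈ Finset.Ico 0 x, f i - ∑ i ∈ Finset.Ico x 0, f i

@[simp] lemma signedSum_zero (f : ℤ → G) : signedSum f 0 = 0 := by simp [signedSum]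

lemma signedSum_add_one (f : ℤ → G) (x : ℤ) : signedSum f (x + 1) = signedSum f x + f x := by
  rcases le_or_gt 0 x with hx | hx
  · rw [signedSum, signedSum, Finset.Ico_eq_empty_of_le hx,
      Finset.Ico_eq_empty_of_le (by omega : 0 ≤ x + 1),
      ← Finset.insert_Ico_right_eq_Ico_add_one hx, Finset.sum_insert (by simp)]
    simp only [Finset.sum_empty, sub_zero, add_comm]
  · rw [signedSum, signedSum, Finset.Ico_eq_empty_of_le (by omega : x + 1 ≤ 0),
      Finset.Ico_eq_empty_of_le hx.le, ← Finset.insert_Ico_add_one_left_eq_Ico hx,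
      Finset.sum_insert (by simp)]
    abel

lemma apply_eq_apply_zero_of_periodic_one {β : Type*} {D : ℤ → β}
    (hD : Function.Periodic D 1) (y : ℤ) : D y = D 0 := by
  simpa using hD.int_mul y 0

variable (a b : ℤ × ℤ → G)

/-- `a z` and `b z` are the increments along the unit steps `(1, 0)` and `(0, 1)` from `z`. -/
def CurlFree : Prop := ∀ z, a z + b (z + (1, 0)) = b z + a (z + (0, 1))

def potential (z : ℤ × ℤ) : G :=
  signedSum (fun x => a (x, 0)) z.1 + signedSum (fun y => b (z.1, y)) z.2

@[simp] lemma potential_zero : potential a b 0 = 0 := by simp [potential]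

lemma potential_add_snd (z : ℤ × ℤ) : potential a b (z + (0, 1)) = potential a b z + b z := by
  simp only [potential, Prod.fst_add, Prod.snd_add, add_zero, signedSum_add_one]
  abel

variable {a b}

lemma potential_add_fst (hab : CurlFree a b) (z : ℤ × ℤ) :
    potential a b (z + (1, 0)) = potential a b z + a z := by
  obtain ⟨x, y⟩ := z
  set D : ℤ → G := fun y => potential a b (x + 1, y) - potential a b (x, y) - a (x, y)
  have hD : Function.Periodic D 1 := fun y => by
    have h := hab (x, y)
    have h₁ := potential_add_snd a b (x + 1, y)
    have h₂ := potential_add_snd a b (x, y)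
    simp only [Prod.mk_add_mk, add_zero] at h h₁ h₂
    simp only [D, h₁, h₂]
    rw [← sub_eq_zero] at h ⊢
    rw [← h]
    abel
  have hD0 : D 0 = 0 := by simp [D, potential, signedSum_add_one]
  have h := (apply_eq_apply_zero_of_periodic_one hD y).trans hD0
  simp only [D, sub_sub, sub_eq_zero] at h
  simpa [add_comm] using h

lemma potential_add_period (hab : CurlFree a b) {v : ℤ × ℤ} (ha : Function.Periodic a v)
    (hb : Function.Periodic b v) (z : ℤ × ℤ) :
    potential a b (z + v) = potential a b z + potential a b v := by
  set D : ℤ × ℤ → G := fun z => potential a b (z + v) - potential a b z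
  have h₁ : ∀ z, D (z + (1, 0)) = D z := fun z => by
    simp only [D, add_right_comm z (1, 0) v, potential_add_fst hab, ha z]
    abel
  have h₂ : ∀ z, D (z + (0, 1)) = D z := fun z => by
    simp only [D, add_right_comm z (0, 1) v, potential_add_snd, hb z]
    abel
  have hz : D z = D 0 := by
    obtain ⟨x, y⟩ := z
    rw [apply_eq_apply_zero_of_periodic_one (D := fun x => D (x, y))
      (fun x => by simpa using h₁ (x, y)) x]
    exact apply_eq_apply_zero_of_periodic_one (D := fun y => D (0, y))
      (fun y => by simpa using h₂ (0, y)) y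
  simpa [D, sub_eq_iff_eq_add'] using hz

lemma potential_add_natCast_fst (hab : CurlFree a b) (z : ℤ × ℤ) (n : ℕ) :
    potential a b (z + ((n : ℤ), 0)) =
      potential a b z + ∑ i ∈ Finset.range n, a (z + ((i : ℤ), 0)) := by
  induction n with
  | zero => simp [Prod.mk_zero_zero]
  | succ n ih =>
    have : z + (((n + 1 : ℕ) : ℤ), 0) = z + ((n : ℤ), 0) + (1, 0) := by ext <;> simp [add_assoc]
    rw [this, potential_add_fst hab, ih, Finset.sum_range_succ, add_assoc]

lemma potential_add_natCast_snd (z : ℤ × ℤ) (n : ℕ) :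
    potential a b (z + (0, (n : ℤ))) =
      potential a b z + ∑ i ∈ Finset.range n, b (z + (0, (i : ℤ))) := by
  induction n with
  | zero => simp [Prod.mk_zero_zero]
  | succ n ih =>
    have : z + (0, ((n + 1 : ℕ) : ℤ)) = z + (0, (n : ℤ)) + (0, 1) := by ext <;> simp [add_assoc]
    rw [this, potential_add_snd, ih, Finset.sum_range_succ, add_assoc]

end Potential

section Height

def cover : ℤ × ℤ →+ Idx L N := (Int.castAddHom (ZMod L)).prodMap (Int.castAddHom (ZMod N))

@[simp] lemma cover_apply (z : ℤ × ℤ) : cover z = ((z.1 : ZMod L), (z.2 : ZMod N)) := rfl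

lemma cover_fst_period : cover (L := L) (N := N) ((L : ℤ), 0) = 0 := by simp

lemma cover_snd_period : cover (L := L) (N := N) (0, (N : ℤ)) = 0 := by simp

lemma apply_eq_of_cover_eq {β : Type*} {F : ℤ × ℤ → β} (hL : Function.Periodic F ((L : ℤ), 0))
    (hN : Function.Periodic F (0, (N : ℤ))) {z z' : ℤ × ℤ}
    (h : cover (L := L) (N := N) z = cover z') : F z = F z' := by
  simp only [cover_apply, Prod.mk.injEq] at h
  obtain ⟨h₁, h₂⟩ := h
  obtain ⟨k, hk⟩ := (ZMod.intCast_eq_intCast_iff_dvd_sub _ _ _).1 h₁.symm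
  obtain ⟨m, hm⟩ := (ZMod.intCast_eq_intCast_iff_dvd_sub _ _ _).1 h₂.symm
  have : z = z' + k • ((L : ℤ), 0) + m • (0, (N : ℤ)) := by
    ext <;> simp only [Prod.smul_mk, Int.zsmul_eq_mul, mul_zero, Prod.fst_add, Prod.snd_add,
      add_zero] <;> linarith
  rw [this, hN.zsmul m, hL.zsmul k]

def lift (g : Idx L N) : ℤ × ℤ := ((g.1.val : ℤ), (g.2.val : ℤ))

@[simp] lemma cover_lift [NeZero L] [NeZero N] (g : Idx L N) : cover (lift g) = g := by
  simp [lift]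

def Dir.toVec : Dir → ℤ × ℤ
  | .R => (1, 0)
  | .Lft => (-1, 0)
  | .U => (0, 1)
  | .D => (0, -1)
  | .UL => (-1, 1)
  | .DR => (1, -1)

lemma nextFace_cover (z : ℤ × ℤ) (d : Dir) :
    nextFace (cover (L := L) (N := N) z) d = cover (z + d.toVec) := by
  cases d <;> simp [nextFace, Dir.toVec, sub_eq_add_neg]

lemma whiteEnd_eq_add (b : Idx L N) (j : Fin 3) : whiteEnd b j = b + whiteEnd 0 j := by
  fin_cases j <;> ext <;> simp [whiteEnd, sub_eq_add_neg]

variable (η : Covering L N)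

def occ (b : Idx L N) (j : Fin 3) : ℤ := if η b = j then 1 else 0

lemma occ_add_occ_add_occ (b : Idx L N) : occ η b 0 + occ η b 1 + occ η b 2 = 1 := by
  rw [← Fin.sum_univ_three (f := occ η b)]
  simp [occ]

variable {η}

lemma occ_of_not_occupiedEdge {e : Idx L N × Fin 3} (h : ¬ occupiedEdge η e) :
    occ η e.1 e.2 = 0 :=
  if_neg h

lemma sum_occ_white [NeZero L] [NeZero N] (hη : IsCovering η) (w : Idx L N) :
    ∑ j : Fin 3, occ η (w - whiteEnd 0 j) j = 1 := by
  obtain ⟨b, hb : whiteEnd b (η b) = w⟩ := Finite.surjective_of_injective hη w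
  have hj (j : Fin 3) : η (w - whiteEnd 0 j) = j ↔ j = η b := by
    constructor
    · intro h
      have : w - whiteEnd 0 j = b := hη <| by
        simp only [h, hb]
        rw [whiteEnd_eq_add (w - _), sub_add_cancel]
      rw [← this, h]
    · rintro rfl
      rw [← hb, whiteEnd_eq_add b, add_sub_cancel_right]
  simp [occ, hj]

variable (η)

/-- Three times the paper's `ε_e 1_{e∈η}` minus its mean `ε_e / 3`, for the edge crossed by
the step `(1, 0)` from `z`; `northStep` is the same for the step `(0, 1)`. -/
def eastStep (z : ℤ × ℤ) : ℤ := 3 * occ η (cover z) 0 - 1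

def northStep (z : ℤ × ℤ) : ℤ := 1 - 3 * occ η (cover z) 1

def height : ℤ × ℤ → ℤ := potential (eastStep η) (northStep η)

variable {η}

lemma curlFree_steps [NeZero L] [NeZero N] (hη : IsCovering η) :
    CurlFree (eastStep η) (northStep η) := by
  intro z
  have hw := sum_occ_white hη (cover (z + (0, 1)))
  rw [Fin.sum_univ_three] at hw
  simp only [cover_apply, Prod.fst_add, Prod.snd_add, add_zero, Int.cast_add, Int.cast_one,
    whiteEnd, Prod.fst_zero, Prod.snd_zero, zero_sub, zero_add, sub_zero, Fin.isValue,
    Matrix.cons_val_zero, Matrix.cons_val_one, Matrix.cons_val, Prod.mk_sub_mk, sub_neg_eq_add,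
    add_sub_cancel_right] at hw
  simp only [eastStep, northStep, cover_apply, Prod.fst_add, Prod.snd_add, add_zero, Int.cast_add,
    Int.cast_one]
  linarith [occ_add_occ_add_occ η (z.1, z.2)]

lemma eastStep_periodic {v : ℤ × ℤ} (hv : cover (L := L) (N := N) v = 0) :
    Function.Periodic (eastStep η) v := fun z => by
  rw [eastStep, map_add, hv, add_zero, eastStep]

lemma northStep_periodic {v : ℤ × ℤ} (hv : cover (L := L) (N := N) v = 0) :
    Function.Periodic (northStep η) v := fun z => by
  rw [northStep, map_add, hv, add_zero, northStep]

lemma height_add_period [NeZero L] [NeZero N] (hη : IsCovering η) {v : ℤ × ℤ}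
    (hv : cover (L := L) (N := N) v = 0) (z : ℤ × ℤ) :
    height η (z + v) = height η z + height η v :=
  potential_add_period (curlFree_steps hη) (eastStep_periodic hv) (northStep_periodic hv) z

lemma sum_range_cast_zmod {M : Type*} [AddCommMonoid M] (n : ℕ) [NeZero n] (f : ZMod n → M) :
    ∑ x ∈ Finset.range n, f x = ∑ s, f s :=
  Finset.sum_nbij' (↑) ZMod.val (by simp) (by simp [ZMod.val_lt])
    (fun x hx => ZMod.val_cast_of_lt (Finset.mem_range.1 hx)) (by simp) (by simp)

lemma sum_range_cover [NeZero L] [NeZero N] {M : Type*} [AddCommMonoid M] (F : Idx L N → M) :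
    ∑ x ∈ Finset.range L, ∑ y ∈ Finset.range N, F (cover ((x : ℤ), (y : ℤ))) = ∑ g, F g := by
  simp only [cover_apply, Int.cast_natCast, Fintype.sum_prod_type]
  rw [← sum_range_cast_zmod L]
  exact Finset.sum_congr rfl fun x _ => sum_range_cast_zmod N fun y => F (x, y)

lemma sum_occ_eq_card [NeZero L] [NeZero N] (j : Fin 3) :
    ∑ g, occ η g j = (Finset.univ.filter fun g : Idx L N => η g = j).card := by
  simp [occ]

lemma winding_east [NeZero L] [NeZero N] (hη : IsCovering η) :
    (N : ℤ) * height η ((L : ℤ), 0) = 3 * nVert η - N * L := by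
  have hrow (y : ℤ) : height η ((L : ℤ), 0) = ∑ x ∈ Finset.range L, eastStep η ((x : ℤ), y) := by
    have h := potential_add_natCast_fst (curlFree_steps hη) (0, y) L
    rw [← height, height_add_period hη cover_fst_period] at h
    simpa [height] using h
  calc (N : ℤ) * height η ((L : ℤ), 0)
      = ∑ y ∈ Finset.range N, ∑ x ∈ Finset.range L, eastStep η ((x : ℤ), (y : ℤ)) := by
        simp [← hrow]
    _ = ∑ g, (3 * occ η g 0 - 1) := by
        rw [Finset.sum_comm]
        exact sum_range_cover fun g => 3 * occ η g 0 - 1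
    _ = 3 * nVert η - N * L := by
        simp [Finset.sum_sub_distrib, ← Finset.mul_sum, sum_occ_eq_card, nVert, mul_comm]

lemma winding_north [NeZero L] [NeZero N] (hη : IsCovering η) :
    (L : ℤ) * height η (0, (N : ℤ)) = N * L - 3 * nNW η := by
  have hcol (x : ℤ) : height η (0, (N : ℤ)) = ∑ y ∈ Finset.range N, northStep η (x, (y : ℤ)) := by
    have h := potential_add_natCast_snd (a := eastStep η) (b := northStep η) (x, 0) N
    rw [← height, height_add_period hη cover_snd_period] at h
    simpa [height] using h
  calc (L : ℤ) * height η (0, (N : ℤ))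
      = ∑ x ∈ Finset.range L, ∑ y ∈ Finset.range N, northStep η ((x : ℤ), (y : ℤ)) := by
        simp [← hcol]
    _ = ∑ g, (1 - 3 * occ η g 1) := sum_range_cover fun g => 1 - 3 * occ η g 1
    _ = N * L - 3 * nNW η := by
        simp [Finset.sum_sub_distrib, ← Finset.mul_sum, sum_occ_eq_card, nNW, mul_comm]

lemma height_add_toVec [NeZero L] [NeZero N] (hη : IsCovering η) (z : ℤ × ℤ) {d : Dir}
    (hd : crossSign d = -1) (hfree : ¬ occupiedEdge η (crossEdge (cover z) d)) :
    height η (z + d.toVec) = height η z + 1 := by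
  have hocc := occ_of_not_occupiedEdge hfree
  cases d <;> simp only [crossSign] at hd <;> norm_num at hd
  case Lft =>
    have h := potential_add_fst (curlFree_steps hη) (z + (-1, 0))
    rw [← height, add_assoc] at h
    simp only [crossEdge, cover_apply, sub_eq_add_neg, Fin.isValue] at hocc
    simp only [Int.reduceNeg, Prod.mk_add_mk, neg_add_cancel, add_zero, Prod.mk_zero_zero,
      eastStep, cover_apply, Prod.fst_add, Int.cast_add, Int.cast_neg, Int.cast_one, Prod.snd_add,
      Fin.isValue, Dir.toVec] at h ⊢
    linarith
  case U =>
    have h := potential_add_snd (eastStep η) (northStep η) z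
    rw [← height] at h
    simp only [crossEdge, cover_apply, Fin.isValue] at hocc
    simp only [northStep, cover_apply, Fin.isValue, Dir.toVec] at h ⊢
    linarith
  case DR =>
    have h₁ := potential_add_fst (curlFree_steps hη) (z + (0, -1))
    have h₂ := potential_add_snd (eastStep η) (northStep η) (z + (0, -1))
    have hb := occ_add_occ_add_occ η (cover (z + (0, -1)))
    rw [← height, add_assoc] at h₁ h₂
    simp only [crossEdge, cover_apply, sub_eq_add_neg, Fin.isValue] at hocc
    simp only [Int.reduceNeg, Prod.mk_add_mk, zero_add, add_zero, eastStep, cover_apply,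
      Prod.fst_add, Prod.snd_add, Int.cast_add, Int.cast_neg, Int.cast_one, Fin.isValue,
      neg_add_cancel, Prod.mk_zero_zero, northStep, Dir.toVec] at h₁ h₂ hb ⊢
    linarith

variable (η)

def tiltedHeight [NeZero L] [NeZero N] (z : ℤ × ℤ) : ℤ :=
  N * L * height η z - z.1 * (3 * nVert η - N * L) - z.2 * (N * L - 3 * nNW η)

def torusHeight [NeZero L] [NeZero N] (g : Idx L N) : ℤ := tiltedHeight η (lift g)

variable {η}

lemma torusHeight_cover [NeZero L] [NeZero N] (hη : IsCovering η) (z : ℤ × ℤ) :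
    torusHeight η (cover z) = tiltedHeight η z := by
  refine apply_eq_of_cover_eq (fun z => ?_) (fun z => ?_) (cover_lift _)
  · simp only [tiltedHeight, height_add_period hη cover_fst_period, Prod.fst_add, Prod.snd_add,
      add_zero]
    linear_combination (L : ℤ) * winding_east hη
  · simp only [tiltedHeight, height_add_period hη cover_snd_period, Prod.fst_add, Prod.snd_add,
      add_zero]
    linear_combination (N : ℤ) * winding_north hη

lemma torusHeight_lt_of_whiteLeftStep [NeZero L] [NeZero N] (hη : IsCovering η)
    (h₁ : 0 < nVert η) (h₂ : 0 < nNW η) (h₁₂ : nVert η + nNW η < N * L) {g g' : Idx L N}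
    (h : WhiteLeftStep η g g') : torusHeight η g < torusHeight η g' := by
  obtain ⟨d, hd, rfl, hfree⟩ := h
  rw [← cover_lift g] at hfree ⊢
  rw [nextFace_cover, torusHeight_cover hη, torusHeight_cover hη]
  have hstep := height_add_toVec hη (lift g) hd hfree
  zify at h₁ h₂ h₁₂
  cases d <;> simp only [crossSign] at hd <;> norm_num at hd <;>
    simp only [Dir.toVec] at hstep <;>
    simp only [tiltedHeight, hstep, Dir.toVec, Prod.fst_add, Prod.snd_add] <;>
    linarith

end Height

/-- For a covering `η ∈ Ω_{L,N;n₁,n₂}` (with `n₁, n₂ > 0` and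
`n₁ + n₂ < NL`), any path of faces started at `f` whose steps cross only unoccupied edges
with the white vertex on the left can contain no closed loop (it never repeats a face);
consequently some such path started at `f` terminates at a face at which all three edges
with the white vertex on the left are occupied. -/
theorem whiteLeft_path_no_loop
    {L N : ℕ} [NeZero L] [NeZero N]
    (n1 n2 : ℕ) (hn1 : 0 < n1) (hn2 : 0 < n2) (hn : n1 + n2 < N * L)
    (η : Covering L N) (hη : η ∈ Omega L N n1 n2) (f : Idx L N) :
    (∀ (n : ℕ) (fs : Fin (n + 1) → Idx L N), fs 0 = f →
      (∀ i : Fin n, WhiteLeftStep η (fs i.castSucc) (fs i.succ)) →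
      Function.Injective fs) ∧
    (∃ (n : ℕ) (fs : Fin (n + 1) → Idx L N), fs 0 = f ∧
      (∀ i : Fin n, WhiteLeftStep η (fs i.castSucc) (fs i.succ)) ∧
      ∀ d : Dir, crossSign d = -1 → occupiedEdge η (crossEdge (fs (Fin.last n)) d)) := by
  obtain ⟨hcov, rfl, rfl⟩ := hη
  have hlt : ∀ g g', WhiteLeftStep η g g' → torusHeight η g < torusHeight η g' :=
    fun _ _ => torusHeight_lt_of_whiteLeftStep hcov hn1 hn2 hn
  refine ⟨fun n fs _ hsteps => path_injective_of_lt _ hlt hsteps, ?_⟩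
  obtain ⟨n, fs, h0, hsteps, hstuck⟩ := exists_path_to_terminal _ hlt f
  exact ⟨n, fs, h0, hsteps, fun d hd => by_contra fun hfree => hstuck _ ⟨d, hd, rfl, hfree⟩⟩

end HexDimers
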